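/- arXiv:1407.8423 — 2 statements merged into one kernel-verified Lean document; each statement's English description precedes it below -/
import Mathlib

section
/- Let v: Q₊ → ℂ with v(0)=0 satisfy v(β+αᵢ) − v(β) = (λ−β | αᵢ) for all i and β. For a path p = (p₀,…,p_N) from 0 to β with steps simple roots, define x(p) = ∏_{k=1}^N 1/v(p_k) (assuming all v(p_k) ≠ 0), and let p_{k,i} be the path obtained by inserting a step αᵢ after vertex p_k. Then Σ_{k=0}^N (λ − p_k | αᵢ) · x(p_{k,i}) = x(p). -/
/-- For any function v with v(0)=0 satisfying the difference equations
v(β+αᵢ) − v(β) = (λ−β|αᵢ), the path weights x(p) = ∏ 1/v(p_k) satisfy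
Σ_{k=0}^N (λ−p_k|αᵢ) x(p_{k,i}) = x(p) for the augmented paths p_{k,i}. -/
theorem path_weight_insertion_identity
    {V : Type*} [AddCommGroup V] [Module ℂ V] {r N : ℕ}
    (B : V →ₗ[ℂ] V →ₗ[ℂ] ℂ) (α : Fin r → V) (lam : V)
    (emb : (Fin r → ℕ) → V) (hemb : ∀ β, emb β = ∑ i, (β i : ℂ) • α i)
    (v : (Fin r → ℕ) → ℂ)
    (hv0 : v 0 = 0)
    (hvne : ∀ γ : Fin r → ℕ, γ ≠ 0 → v γ ≠ 0)
    (hdiff : ∀ (β : Fin r → ℕ) (i : Fin r),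
      v (β + Pi.single i 1) - v β = B (lam - emb β) (α i))
    (p : ℕ → (Fin r → ℕ)) (hp0 : p 0 = 0)
    (s : ℕ → Fin r)
    (hstep : ∀ k < N, p (k + 1) = p k + Pi.single (s k) 1)
    (i : Fin r) :
    ∑ k ∈ Finset.range (N + 1),
      B (lam - emb (p k)) (α i) *
        ((∏ ℓ ∈ Finset.range k, (v (p (ℓ + 1)))⁻¹) *
          (v (p k + Pi.single i 1))⁻¹ *
          ∏ ℓ ∈ Finset.Ico k N, (v (p (ℓ + 1) + Pi.single i 1))⁻¹)
      = ∏ k ∈ Finset.range N, (v (p (k + 1)))⁻¹ := by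
  have hne : ∀ (β : Fin r → ℕ) (j : Fin r), β + Pi.single j 1 ≠ 0 := by
    intro β j h
    have := congrFun h j
    simp [Pi.single_apply] at this
  have hB : ∀ k, B (lam - emb (p k)) (α i) = v (p k + Pi.single i 1) - v (p k) :=
    fun k => (hdiff (p k) i).symm
  have key : ∀ m, m ≤ N → ∑ k ∈ Finset.range (m + 1),
      B (lam - emb (p k)) (α i) *
        ((∏ ℓ ∈ Finset.range k, (v (p (ℓ + 1)))⁻¹) *
          (v (p k + Pi.single i 1))⁻¹ *
          ∏ ℓ ∈ Finset.Ico k N, (v (p (ℓ + 1) + Pi.single i 1))⁻¹)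
      = (∏ ℓ ∈ Finset.range m, (v (p (ℓ + 1)))⁻¹) *
        ∏ ℓ ∈ Finset.Ico m N, (v (p (ℓ + 1) + Pi.single i 1))⁻¹ := by
    intro m hm
    induction m with
    | zero =>
      have hq : v (p 0 + Pi.single i 1) ≠ 0 := hvne _ (hne _ _)
      rw [Finset.sum_range_one, hB 0, hp0, hv0]
      simp only [Finset.prod_range_zero, one_mul, sub_zero]
      rw [hp0] at hq
      rw [← mul_assoc, mul_inv_cancel₀ hq, one_mul]
    | succ m ih =>
      have hmN : m < N := hm
      have hpm1 : p (m + 1) = p m + Pi.single (s m) 1 := hstep m hmN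
      have hpm1ne : v (p (m + 1)) ≠ 0 := by
        rw [hpm1]; exact hvne _ (hne _ _)
      have hqne : v (p (m + 1) + Pi.single i 1) ≠ 0 := hvne _ (hne _ _)
      have hsplit : (∏ ℓ ∈ Finset.Ico m N, (v (p (ℓ + 1) + Pi.single i 1))⁻¹)
          = (v (p (m + 1) + Pi.single i 1))⁻¹ *
            ∏ ℓ ∈ Finset.Ico (m + 1) N, (v (p (ℓ + 1) + Pi.single i 1))⁻¹ :=
        Finset.prod_eq_prod_Ico_succ_bot hmN _
      rw [Finset.sum_range_succ, ih (le_of_lt hmN), hB (m + 1),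
        Finset.prod_range_succ, hsplit]
      set A := ∏ ℓ ∈ Finset.range m, (v (p (ℓ + 1)))⁻¹ with hA
      set C := ∏ ℓ ∈ Finset.Ico (m + 1) N, (v (p (ℓ + 1) + Pi.single i 1))⁻¹ with hC
      set w := v (p (m + 1)) with hw
      set q := v (p (m + 1) + Pi.single i 1) with hq
      linear_combination A * C * w⁻¹ * (mul_inv_cancel₀ hqne) -
        A * C * q⁻¹ * (mul_inv_cancel₀ hpm1ne)
  have := key N le_rfl
  simpa using this
end

section
/- The A₂ partition function Z_{β₁,β₂} defined by Z_{0,0}=1 and the recursion ((λ₁+1)β₁+(λ₂+1)β₂−β₁²−β₂²+β₁β₂)·Z_{β₁,β₂} = Z_{β₁−1,β₂} + Z_{β₁,β₂−1} (terms with negative indices omitted) is given in factorized form by Bump's formula: Z_{β₁,β₂} = [∏_{j=1}^{β₁+β₂}(λ₁+λ₂+2−j)] / ([∏_{j=1}^{β₁} j(λ₁+1−j)(λ₁+λ₂+2−j)]·[∏_{j=1}^{β₂} j(λ₂+1−j)(λ₁+λ₂+2−j)]). -/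
/-- Bump's factorized formula for the A₂ partition function defined by
Z_{0,0} = 1 and the recursion
((λ₁+1)β₁+(λ₂+1)β₂−β₁²−β₂²+β₁β₂) Z_{β₁,β₂} = Z_{β₁−1,β₂} + Z_{β₁,β₂−1}. -/
theorem a2_bump_formula (l1 l2 : ℂ)
    (h1 : ∀ j : ℕ, 1 ≤ j → l1 + 1 - j ≠ 0)
    (h2 : ∀ j : ℕ, 1 ≤ j → l2 + 1 - j ≠ 0)
    (h12 : ∀ j : ℕ, 1 ≤ j → l1 + l2 + 2 - j ≠ 0)
    (hquad : ∀ b1 b2 : ℕ, ¬(b1 = 0 ∧ b2 = 0) →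
      (l1 + 1) * b1 + (l2 + 1) * b2 - (b1 : ℂ) ^ 2 - (b2 : ℂ) ^ 2 + b1 * b2 ≠ 0)
    (Z : ℕ → ℕ → ℂ) (hZ00 : Z 0 0 = 1)
    (hrec : ∀ b1 b2 : ℕ, ¬(b1 = 0 ∧ b2 = 0) →
      ((l1 + 1) * b1 + (l2 + 1) * b2 - (b1 : ℂ) ^ 2 - (b2 : ℂ) ^ 2 + b1 * b2) * Z b1 b2 =
        (if 1 ≤ b1 then Z (b1 - 1) b2 else 0) + (if 1 ≤ b2 then Z b1 (b2 - 1) else 0)) :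
    ∀ b1 b2 : ℕ, Z b1 b2 =
      (∏ j ∈ Finset.Icc 1 (b1 + b2), (l1 + l2 + 2 - j)) /
        ((∏ j ∈ Finset.Icc 1 b1, (j : ℂ) * (l1 + 1 - j) * (l1 + l2 + 2 - j)) *
         (∏ j ∈ Finset.Icc 1 b2, (j : ℂ) * (l2 + 1 - j) * (l1 + l2 + 2 - j))) := by
  set P : ℕ → ℂ := fun n => ∏ j ∈ Finset.Icc 1 n, (l1 + l2 + 2 - j) with hP
  set A : ℕ → ℂ := fun b => ∏ j ∈ Finset.Icc 1 b, (j : ℂ) * (l1 + 1 - j) * (l1 + l2 + 2 - j) with hA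
  set B : ℕ → ℂ := fun b => ∏ j ∈ Finset.Icc 1 b, (j : ℂ) * (l2 + 1 - j) * (l1 + l2 + 2 - j) with hB
  have hPne : ∀ n, P n ≠ 0 := by
    intro n
    refine Finset.prod_ne_zero_iff.mpr fun j hj => h12 j (Finset.mem_Icc.mp hj).1
  have hAne : ∀ b, A b ≠ 0 := by
    intro b
    refine Finset.prod_ne_zero_iff.mpr fun j hj => ?_
    have hj1 := (Finset.mem_Icc.mp hj).1
    exact mul_ne_zero (mul_ne_zero (Nat.cast_ne_zero.mpr (by omega)) (h1 j hj1)) (h12 j hj1)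
  have hBne : ∀ b, B b ≠ 0 := by
    intro b
    refine Finset.prod_ne_zero_iff.mpr fun j hj => ?_
    have hj1 := (Finset.mem_Icc.mp hj).1
    exact mul_ne_zero (mul_ne_zero (Nat.cast_ne_zero.mpr (by omega)) (h2 j hj1)) (h12 j hj1)
  have hPs : ∀ n, P (n + 1) = P n * (l1 + l2 + 2 - (n + 1 : ℕ)) := fun n =>
    Finset.prod_Icc_succ_top (Nat.succ_le_succ (Nat.zero_le n)) _
  have hAs : ∀ b, A (b + 1) = A b * (((b + 1 : ℕ) : ℂ) * (l1 + 1 - (b + 1 : ℕ)) * (l1 + l2 + 2 - (b + 1 : ℕ))) := fun b =>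
    Finset.prod_Icc_succ_top (Nat.succ_le_succ (Nat.zero_le b)) _
  have hBs : ∀ b, B (b + 1) = B b * (((b + 1 : ℕ) : ℂ) * (l2 + 1 - (b + 1 : ℕ)) * (l1 + l2 + 2 - (b + 1 : ℕ))) := fun b =>
    Finset.prod_Icc_succ_top (Nat.succ_le_succ (Nat.zero_le b)) _
  suffices H : ∀ n b1 b2, b1 + b2 = n → Z b1 b2 = P (b1 + b2) / (A b1 * B b2) by
    intro b1 b2; exact H (b1 + b2) b1 b2 rfl
  intro n
  induction n with
  | zero =>
    intro b1 b2 h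
    obtain ⟨rfl, rfl⟩ := Nat.add_eq_zero.mp h
    simp [hP, hA, hB, hZ00]
  | succ n ih =>
    intro b1 b2 h
    have hne : ¬(b1 = 0 ∧ b2 = 0) := by rintro ⟨rfl, rfl⟩; simp at h
    have hq := hquad b1 b2 hne
    have hr := hrec b1 b2 hne
    have e1 : (if 1 ≤ b1 then Z (b1 - 1) b2 else 0)
        = (if 1 ≤ b1 then P ((b1 - 1) + b2) / (A (b1 - 1) * B b2) else 0) := by
      by_cases h' : 1 ≤ b1
      · simp only [h', if_true]; exact ih (b1 - 1) b2 (by omega)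
      · simp [h']
    have e2 : (if 1 ≤ b2 then Z b1 (b2 - 1) else 0)
        = (if 1 ≤ b2 then P (b1 + (b2 - 1)) / (A b1 * B (b2 - 1)) else 0) := by
      by_cases h' : 1 ≤ b2
      · simp only [h', if_true]; exact ih b1 (b2 - 1) (by omega)
      · simp [h']
    rw [e1, e2] at hr
    refine mul_left_cancel₀ hq (hr.trans ?_)
    -- key algebraic identity
    clear hr e1 e2 hZ00 hrec hquad ih
    match b1, b2 with
    | 0, 0 => exact absurd ⟨rfl, rfl⟩ hne
    | (k+1), 0 =>
      simp only [if_pos (by omega : 1 ≤ k + 1), if_neg (by omega : ¬ 1 ≤ 0),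
        Nat.add_sub_cancel, add_zero]
      rw [← mul_div_assoc, div_eq_div_iff (mul_ne_zero (hAne k) (hBne 0))
        (mul_ne_zero (hAne (k+1)) (hBne 0)), hPs k, hAs k]
      push_cast
      ring
    | 0, (m+1) =>
      simp only [if_pos (by omega : 1 ≤ m + 1), if_neg (by omega : ¬ 1 ≤ 0),
        Nat.add_sub_cancel, zero_add]
      rw [← mul_div_assoc, div_eq_div_iff (mul_ne_zero (hAne 0) (hBne m))
        (mul_ne_zero (hAne 0) (hBne (m+1))), hPs m, hBs m]
      push_cast
      ring
    | (k+1), (m+1) =>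
      simp only [if_pos (by omega : 1 ≤ k + 1), if_pos (by omega : 1 ≤ m + 1),
        Nat.add_sub_cancel]
      have hkm : (k + 1) + (m + 1) = (k + (m + 1)) + 1 := by omega
      have hkm2 : (k + 1) + m = k + (m + 1) := by omega
      rw [hkm, hkm2, div_add_div _ _ (mul_ne_zero (hAne k) (hBne (m+1)))
        (mul_ne_zero (hAne (k+1)) (hBne m)), ← mul_div_assoc,
        div_eq_div_iff (mul_ne_zero (mul_ne_zero (hAne k) (hBne (m+1))) (mul_ne_zero (hAne (k+1)) (hBne m)))
          (mul_ne_zero (hAne (k+1)) (hBne (m+1))),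
        hPs (k + (m + 1)), hAs k, hBs m]
      push_cast
      ring
end
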